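/- For every integer n ≥ 0, every integer k, and every real x: E_{n,p,q}^{(k)}(x) = Σ_{l=0}^{n} Σ_{i=l}^{n} binom(n,i) · S_2(i,l) · E_{n−i,p,q}^{(k)}(−l) · x^{(l)}, where x^{(l)} = x(x+1)⋯(x+l−1) is the rising factorial with x^{(0)} = 1. -/

import Mathlib

open Finset

/-- The `(p,q)`-integer `[m]_{p,q} = (p^m - q^m)/(p - q)`. -/
noncomputable def pqInt (p q : ℝ) (m : ℕ) : ℝ := (p ^ m - q ^ m) / (p - q)

/-- The exponential generating function `∑ f n * t^n / n!` of a sequence `f`. -/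
noncomputable def egf (f : ℕ → ℝ) : PowerSeries ℝ :=
  PowerSeries.mk fun n => f n / n.factorial

/-- Formal substitution of a power series `S` with zero constant term into the
`(p,q)`-polylogarithm `Li_{k,p,q}(s) = ∑_{m ≥ 1} s^m / [m]_{p,q}^k`.
(For `m > n` the series `S^m` has zero `n`-th coefficient, so the sum is finite.) -/
noncomputable def pqLi (p q : ℝ) (k : ℤ) (S : PowerSeries ℝ) : PowerSeries ℝ :=
  PowerSeries.mk fun n =>
    ∑ m ∈ Finset.Icc 1 n, PowerSeries.coeff n (S ^ m) / pqInt p q m ^ k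

/-- Stirling numbers of the second kind: the number of partitions of an
`n`-element set into `m` nonempty blocks. -/
def stirling2 : ℕ → ℕ → ℕ
  | 0, 0 => 1
  | 0, _ + 1 => 0
  | _ + 1, 0 => 0
  | n + 1, m + 1 => (m + 1) * stirling2 n (m + 1) + stirling2 n m

/-
Write `u = 1 - e^{-t}`. The binomial series gives `e^{xt} = (1 - u)^{-x} = ∑ₗ x^{(l)} uˡ / l!`,
and `uˡ = e^{-lt} (eᵗ - 1)ˡ`. Multiplying by `L = 2 Li_{k,p,q}(u)` and using the generating
function at the points `-l` turns `L e^{xt}` into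
`(1 + eᵗ) ∑ₗ x^{(l)} / l! · (eᵗ - 1)ˡ · ∑ₘ E_m(-l) tᵐ / m!`.
Cancelling the unit `1 + eᵗ` and expanding `(eᵗ - 1)ˡ = l! ∑ᵢ S₂(i, l) tⁱ / i!` gives the
formula. Since `uˡ` has order `l`, only the terms `l ≤ n` matter modulo `t^{n+1}`, so all sums
are finite.
-/

open PowerSeries Nat

theorem stirling2_eq_stirlingSecond : stirling2 = stirlingSecond := by
  funext n l
  induction n generalizing l with
  | zero => cases l <;> rfl
  | succ n ih => cases l <;> simp [stirling2, stirlingSecond_succ_succ, ih]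

theorem pow_eq_sum_stirlingSecond_mul_descPochhammer_eval {R : Type*} [CommRing R] (x : R)
    (n : ℕ) :
    x ^ n = ∑ l ∈ range (n + 1), (stirlingSecond n l : R) * (descPochhammer R l).eval x := by
  induction n with
  | zero => simp
  | succ n ih =>
    set f : ℕ → R := fun l => l * stirlingSecond n l * (descPochhammer R l).eval x
    have hshift : ∑ l ∈ range (n + 1), f (l + 1) = ∑ l ∈ range (n + 1), f l := by
      rw [sum_range_succ, sum_range_succ' f]
      simp [f, stirlingSecond_eq_zero_of_lt n.lt_succ_self]
    calc x ^ (n + 1)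
        = ∑ l ∈ range (n + 1),
            (stirlingSecond n l * (descPochhammer R (l + 1)).eval x + f l) := by
          rw [pow_succ, ih, sum_mul]
          refine sum_congr rfl fun l _ => ?_
          rw [descPochhammer_succ_eval]
          ring
      _ = ∑ l ∈ range (n + 1),
            (f (l + 1) + stirlingSecond n l * (descPochhammer R (l + 1)).eval x) := by
          rw [sum_add_distrib, sum_add_distrib, hshift, add_comm]
      _ = _ := by
          rw [sum_range_succ' _ (n + 1)]
          simp only [f, stirlingSecond_succ_succ, stirlingSecond_succ_zero]
          push_cast
          simp only [zero_mul, add_zero, add_mul]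

theorem ascPochhammer_eval_eq_prod_range {R : Type*} [CommSemiring R] (n : ℕ) (r : R) :
    (ascPochhammer R n).eval r = ∏ j ∈ range n, (r + j) := by
  induction n with
  | zero => simp
  | succ n ih => rw [ascPochhammer_succ_eval, ih, prod_range_succ]

theorem derivative_exp_sub_one_pow_succ (A : Type*) [CommRing A] [Algebra ℚ A] (m : ℕ) :
    d⁄dX A ((exp A - 1) ^ (m + 1)) =
      C (m + 1 : A) * ((exp A - 1) ^ (m + 1) + (exp A - 1) ^ m) := by
  rw [Derivation.leibniz_pow, map_sub, derivative_exp, Derivation.map_one_eq_zero, sub_zero,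
    add_tsub_cancel_right, nsmul_eq_mul, smul_eq_mul, map_add, map_natCast, map_one]
  push_cast
  ring

theorem coeff_exp_sub_one_pow (K : Type*) [Field K] [CharZero K] (n l : ℕ) :
    coeff n ((exp K - 1) ^ l) = (stirlingSecond n l * l ! / n ! : K) := by
  induction n generalizing l with
  | zero => cases l <;> simp [map_pow]
  | succ n ih =>
    cases l with
    | zero => simp [coeff_one]
    | succ m =>
      have h := coeff_derivative ((exp K - 1) ^ (m + 1)) n
      rw [derivative_exp_sub_one_pow_succ, coeff_C_mul, map_add, ih, ih] at h
      have hn : (n ! : K) ≠ 0 := cast_ne_zero.2 (factorial_ne_zero n)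
      rw [eq_div_iff (cast_ne_zero.2 (factorial_ne_zero _)), factorial_succ n, cast_mul,
        ← mul_assoc, cast_add_one, ← h, stirlingSecond_succ_succ, factorial_succ m]
      field_simp
      push_cast
      ring

section

variable {K : Type*} [Field K] [CharZero K]

theorem coeff_one_sub_rescale_exp_pow (m l : ℕ) :
    coeff m ((1 - rescale (-1) (exp K)) ^ l) =
      (-1) ^ (m + l) * (stirlingSecond m l * l ! / m ! : K) := by
  rw [show 1 - rescale (-1) (exp K) = C (-1 : K) * rescale (-1) (exp K - 1) by simp,
    mul_pow, ← map_pow, ← map_pow, coeff_C_mul, coeff_rescale, coeff_exp_sub_one_pow]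
  ring

theorem rescale_neg_natCast_exp_mul_exp_sub_one_pow (l : ℕ) :
    rescale (-l : K) (exp K) * (exp K - 1) ^ l = (1 - rescale (-1) (exp K)) ^ l := by
  have h := exp_mul_exp_neg_eq_one (A := K)
  rw [evalNegHom] at h
  rw [show (-l : K) = l * -1 by ring, ← rescale_rescale, ← exp_pow_eq_rescale_exp, map_pow,
    ← mul_pow]
  congr 1
  linear_combination h

theorem X_pow_dvd_rescale_exp_sub_sum_ascPochhammer (x : K) (n : ℕ) :
    X ^ (n + 1) ∣ rescale x (exp K) - ∑ l ∈ range (n + 1),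
      C ((ascPochhammer K l).eval x / l !) * (1 - rescale (-1) (exp K)) ^ l := by
  refine X_pow_dvd_iff.2 fun m hm => ?_
  have hsub : range (m + 1) ⊆ range (n + 1) := range_subset_range.2 hm
  rw [map_sub, sub_eq_zero, map_sum, ← sum_subset hsub fun l _ hl => by
    rw [coeff_C_mul, coeff_one_sub_rescale_exp_pow,
      stirlingSecond_eq_zero_of_lt (by simpa using hl)]
    simp]
  have hterm : ∀ l ∈ range (m + 1), coeff m (C ((ascPochhammer K l).eval x / l !) *
      (1 - rescale (-1) (exp K)) ^ l) =
      (-1) ^ m / m ! * (stirlingSecond m l * (descPochhammer K l).eval (-x)) := by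
    intro l _
    have hl : (l ! : K) ≠ 0 := cast_ne_zero.2 (factorial_ne_zero l)
    rw [coeff_C_mul, coeff_one_sub_rescale_exp_pow, ← neg_neg x,
      ascPochhammer_eval_neg_eq_descPochhammer, neg_neg]
    have hsign : (-1 : K) ^ l * (-1) ^ (m + l) = (-1) ^ m := by
      rw [pow_add, mul_left_comm, ← pow_add, Even.neg_one_pow ⟨l, rfl⟩, mul_one]
    field_simp
    linear_combination (descPochhammer K l).eval (-x) * stirlingSecond m l / m ! * hsign
  rw [sum_congr rfl hterm, ← mul_sum, ← pow_eq_sum_stirlingSecond_mul_descPochhammer_eval,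
    coeff_rescale, coeff_exp, div_mul_eq_mul_div, ← mul_pow, neg_one_mul, neg_neg]
  simp [div_eq_mul_inv]

theorem X_pow_dvd_sub_sum_ascPochhammer_of_mul_rescale_exp {L A : K⟦X⟧} (hA : IsUnit A)
    {F : K → K⟦X⟧} (hF : ∀ y, L * rescale y (exp K) = A * F y) (x : K) (n : ℕ) :
    X ^ (n + 1) ∣ F x - ∑ l ∈ range (n + 1),
      C ((ascPochhammer K l).eval x / l !) * ((exp K - 1) ^ l * F (-l)) := by
  have hterm : ∀ l ∈ range (n + 1), A * (C ((ascPochhammer K l).eval x / l !) *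
      ((exp K - 1) ^ l * F (-l))) =
      L * (C ((ascPochhammer K l).eval x / l !) * (1 - rescale (-1) (exp K)) ^ l) := by
    intro l _
    rw [← rescale_neg_natCast_exp_mul_exp_sub_one_pow]
    linear_combination -(C ((ascPochhammer K l).eval x / l !) * (exp K - 1) ^ l) * hF (-l)
  rw [← hA.dvd_mul_left, mul_sub, ← hF, mul_sum, sum_congr rfl hterm, ← mul_sum, ← mul_sub]
  exact dvd_mul_of_dvd_right (X_pow_dvd_rescale_exp_sub_sum_ascPochhammer x n) L

end

theorem coeff_egf_mul (f g : ℕ → ℝ) (n : ℕ) :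
    coeff n (egf f * egf g) = (∑ i ∈ range (n + 1), n.choose i * f i * g (n - i)) / n ! := by
  rw [coeff_mul, Finset.Nat.sum_antidiagonal_eq_sum_range_succ_mk, sum_div]
  refine sum_congr rfl fun i hi => ?_
  rw [Nat.cast_choose ℝ (Nat.lt_succ_iff.1 (mem_range.1 hi))]
  simp only [egf, coeff_mk]
  field_simp

theorem exp_sub_one_pow_eq_egf (l : ℕ) :
    (exp ℝ - 1) ^ l = egf fun i => l ! * stirlingSecond i l := by
  ext i
  rw [coeff_exp_sub_one_pow, egf, coeff_mk]
  ring

theorem coeff_exp_sub_one_pow_mul_egf (g : ℕ → ℝ) (n l : ℕ) :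
    coeff n ((exp ℝ - 1) ^ l * egf g) =
      l ! * (∑ i ∈ Icc l n, n.choose i * stirlingSecond i l * g (n - i)) / n ! := by
  have hsub : Icc l n ⊆ range (n + 1) := fun i hi => by simp at hi ⊢; omega
  rw [exp_sub_one_pow_eq_egf, coeff_egf_mul, mul_sum, ← sum_subset hsub fun i _ hi => by
    rw [stirlingSecond_eq_zero_of_lt (by simp at *; omega)]; simp]
  congr 1
  exact sum_congr rfl fun i _ => by ring

theorem pqPolyEuler_eq_sum_stirling2_risingFactorial
    (p q : ℝ) (k : ℤ)
    (E : ℝ → ℕ → ℝ)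
    (hE : ∀ x : ℝ,
      2 * pqLi p q k (1 - PowerSeries.rescale (-1) (PowerSeries.exp ℝ)) *
          PowerSeries.rescale x (PowerSeries.exp ℝ) =
        (1 + PowerSeries.exp ℝ) * egf (E x)) :
    ∀ (n : ℕ) (x : ℝ),
      E x n =
        ∑ l ∈ Finset.range (n + 1), ∑ i ∈ Finset.Icc l n,
          (n.choose i : ℝ) * (stirling2 i l : ℝ) * E (-(l : ℝ)) (n - i) *
            ∏ j ∈ Finset.range l, (x + (j : ℝ)) := by
  intro n x
  have hA : IsUnit (1 + exp ℝ) := by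
    rw [isUnit_iff_constantCoeff, map_add, constantCoeff_exp, map_one]
    norm_num
  have hcoeff := X_pow_dvd_iff.1
    (X_pow_dvd_sub_sum_ascPochhammer_of_mul_rescale_exp hA (F := fun y => egf (E y)) hE x n)
    n n.lt_succ_self
  simp only [map_sub, map_sum, sub_eq_zero, coeff_C_mul, coeff_exp_sub_one_pow_mul_egf] at hcoeff
  rw [egf, coeff_mk] at hcoeff
  have hn : (n ! : ℝ) ≠ 0 := cast_ne_zero.2 (factorial_ne_zero n)
  rw [stirling2_eq_stirlingSecond, ← div_left_inj' hn, hcoeff, sum_div]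
  refine sum_congr rfl fun l _ => ?_
  have hl : (l ! : ℝ) ≠ 0 := cast_ne_zero.2 (factorial_ne_zero l)
  rw [ascPochhammer_eval_eq_prod_range, ← sum_mul]
  field_simp
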